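/- Let F_q be a finite field with q odd, and let P, Q be distinct monic irreducible polynomials in F_q[t] such that ((q-1)/2)·deg(P)·deg(Q) is even. Then (Q/P) = (P/Q), where (·/·) is the quadratic residue symbol in F_q[t]. -/

import Mathlib

/-!
Both symbols are powers of one resultant. For `L = F[t]/(P)`, a field with `q ^ deg P`
elements, the norm `N : L → F` is `x ↦ x ^ ((q ^ deg P - 1) / (q - 1))`, so Euler's criterion
gives `(Q/P) = N(Q mod P) ^ ((q - 1) / 2) = Res(P, Q) ^ ((q - 1) / 2)`. Since
`Res(P, Q) = (-1) ^ (deg P * deg Q) * Res(Q, P)`, the two symbols differ by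
`(-1) ^ ((q - 1) / 2 * deg P * deg Q)`.
-/

open Polynomial

theorem FiniteField.algebraMap_norm_pow_half {K L : Type*} [Field K] [Field L] [Algebra K L]
    [Finite L] (hK : Odd (Nat.card K)) (x : L) :
    algebraMap K L (Algebra.norm K x ^ ((Nat.card K - 1) / 2)) = x ^ ((Nat.card L - 1) / 2) := by
  have : Finite K := Finite.of_injective _ (algebraMap K L).injective
  have hK1 : 1 < Nat.card K := Finite.one_lt_card
  obtain ⟨k, hk⟩ := hK
  obtain ⟨m, hm⟩ := Nat.sub_one_dvd_pow_sub_one (Nat.card K) (Module.finrank K L)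
  rw [map_pow, algebraMap_norm_eq_pow, ← pow_mul, Module.natCard_eq_pow_finrank (K := K), hm,
    show Nat.card K - 1 = 2 * k by omega, Nat.mul_div_cancel_left _ (by omega),
    Nat.mul_div_cancel_left _ two_pos, mul_assoc, Nat.mul_div_cancel_left _ two_pos, mul_comm]

theorem AdjoinRoot.norm_mk_eq_resultant {F : Type*} [Field F] [PerfectField F] {P : F[X]}
    [Fact (Irreducible P)] (hP : P.Monic) (Q : F[X]) :
    Algebra.norm F (AdjoinRoot.mk P Q) = resultant P Q := by
  classical
  have := hP.finite_adjoinRoot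
  let E := AlgebraicClosure F
  let pb := AdjoinRoot.powerBasis' hP
  have hmin : minpoly F pb.gen = P := by
    rw [AdjoinRoot.powerBasis'_gen, AdjoinRoot.minpoly_root hP.ne_zero, hP.leadingCoeff, inv_one,
      C_1, mul_one]
  have hnodup : (P.aroots E).Nodup :=
    nodup_roots (PerfectField.separable_of_irreducible (Fact.out : Irreducible P)).map
  apply (algebraMap F E).injective
  -- the embeddings `AdjoinRoot P →ₐ[F] E` are indexed by the roots of `P` in `E`
  rw [Algebra.norm_eq_prod_embeddings, ← AdjoinRoot.aeval_eq]
  simp_rw [← aeval_algHom_apply]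
  rw [Fintype.prod_equiv pb.liftEquiv' _ (fun y => aeval (y : E) Q) (fun σ => by simp [pb]),
    Finset.prod_mem_multiset _ _ (fun y => aeval y Q) (fun _ => rfl), hmin,
    Finset.prod_eq_multiset_prod, Multiset.toFinset_val, hnodup.dedup, ← resultant_map_map,
    ← natDegree_map (algebraMap F E) (p := P), ← natDegree_map (algebraMap F E) (p := Q),
    resultant_eq_prod_eval _ _ _ le_rfl (IsAlgClosed.splits _), (hP.map _).leadingCoeff, one_pow,
    one_mul]
  simp [aeval_def, eval_map]

theorem Polynomial.resultant_pow_half_eq_of_dvd_pow_sub_C {F : Type*} [Field F] [Fintype F]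
    (hq : Odd (Fintype.card F)) {P Q : F[X]} (hP : P.Monic) (hPi : Irreducible P) {e : F}
    (h : P ∣ Q ^ ((Fintype.card F ^ P.natDegree - 1) / 2) - C e) :
    resultant P Q ^ ((Fintype.card F - 1) / 2) = e := by
  have := Fact.mk hPi
  have := hP.finite_adjoinRoot
  have : Finite (AdjoinRoot P) := Module.finite_of_finite F
  have hcard : Nat.card (AdjoinRoot P) = Nat.card F ^ P.natDegree := by
    rw [Module.natCard_eq_pow_finrank (K := F), (AdjoinRoot.powerBasis' hP).finrank,
      AdjoinRoot.powerBasis'_dim]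
  rw [Fintype.card_eq_nat_card] at hq h ⊢
  apply (algebraMap F (AdjoinRoot P)).injective
  rw [← AdjoinRoot.norm_mk_eq_resultant hP, FiniteField.algebraMap_norm_pow_half hq, hcard,
    ← map_pow, AdjoinRoot.algebraMap_eq, ← AdjoinRoot.mk_C, AdjoinRoot.mk_eq_mk]
  exact h

theorem stmt18_general (F : Type) [Field F] [Fintype F] (hq : Odd (Fintype.card F))
    (P Q : F[X]) (hP : P.Monic) (hQ : Q.Monic)
    (hPi : Irreducible P) (hQi : Irreducible Q)
    (heven : Even ((Fintype.card F - 1) / 2 * P.natDegree * Q.natDegree))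
    (e₁ e₂ : F)
    (h₁ : P ∣ Q ^ ((Fintype.card F ^ P.natDegree - 1) / 2) - C e₁)
    (h₂ : Q ∣ P ^ ((Fintype.card F ^ Q.natDegree - 1) / 2) - C e₂) :
    e₁ = e₂ := by
  rw [← resultant_pow_half_eq_of_dvd_pow_sub_C hq hP hPi h₁,
    ← resultant_pow_half_eq_of_dvd_pow_sub_C hq hQ hQi h₂,
    resultant_comm P Q, mul_pow, ← pow_mul,
    show P.natDegree * Q.natDegree * ((Fintype.card F - 1) / 2) =
      (Fintype.card F - 1) / 2 * P.natDegree * Q.natDegree by ring,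
    heven.neg_one_pow, one_mul]

/-- Quadratic reciprocity in `F_q[t]` for monic irreducibles: if `P ≠ Q` are monic
irreducible and `((q-1)/2)·deg P·deg Q` is even, then `(Q/P) = (P/Q)`, where the
symbols `e₁ = (Q/P)` and `e₂ = (P/Q)` are characterized by Euler's criterion. -/
theorem stmt18 (F : Type) [Field F] [Fintype F] (hq : Odd (Fintype.card F))
    (P Q : F[X]) (hP : P.Monic) (hQ : Q.Monic)
    (hPi : Irreducible P) (hQi : Irreducible Q) (hne : P ≠ Q)
    (heven : Even ((Fintype.card F - 1) / 2 * P.natDegree * Q.natDegree))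
    (e₁ e₂ : F) (he₁ : e₁ = 1 ∨ e₁ = -1) (he₂ : e₂ = 1 ∨ e₂ = -1)
    (h₁ : P ∣ Q ^ ((Fintype.card F ^ P.natDegree - 1) / 2) - C e₁)
    (h₂ : Q ∣ P ^ ((Fintype.card F ^ Q.natDegree - 1) / 2) - C e₂) :
    e₁ = e₂ :=
  stmt18_general F hq P Q hP hQ hPi hQi heven e₁ e₂ h₁ h₂
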